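/- The subgroup N = {(a,1,x) : a(0)=1} is a normal subgroup of the group of almost-Riordan arrays; explicitly, for any (a,g,f) and any (b,1,x), one has (a,g,f)·(b,1,x)·(a,g,f)^{-1} = (1 + x g b̃(f), 1, x), where b̃(x) = (b(x)−1)/x. -/

import Mathlib

open PowerSeries Finset

/-- Shift: `shift h = (h - h₀)/x`, i.e. the series with coefficients `h₁, h₂, …`. -/
noncomputable def shift (h : PowerSeries ℤ) : PowerSeries ℤ :=
  PowerSeries.mk fun n => coeff (n + 1) h

/-- Composition `h ∘ f` of formal power series (intended for `f` with zero constant term,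
in which case `coeff n (f ^ k) = 0` for `k > n`). -/
noncomputable def comp (h f : PowerSeries ℤ) : PowerSeries ℤ :=
  PowerSeries.mk fun n => ∑ k ∈ Finset.range (n + 1), coeff k h * coeff n (f ^ k)

/-- Action of an almost-Riordan array `(a,g,f)` on a power series `b`:
`(a,g,f)·b = b₀ a + x g b̃(f)` where `b̃ = (b - b₀)/x`. -/
noncomputable def act (a g f b : PowerSeries ℤ) : PowerSeries ℤ :=
  C (coeff 0 b) * a + X * g * comp (shift b) f

/-- Product of almost-Riordan arrays: `(a,g,f)·(b,u,v) = ((a,g,f)·b, g·u(f), v(f))`. -/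
noncomputable def arMul (t s : PowerSeries ℤ × PowerSeries ℤ × PowerSeries ℤ) :
    PowerSeries ℤ × PowerSeries ℤ × PowerSeries ℤ :=
  (act t.1 t.2.1 t.2.2 s.1, t.2.1 * comp s.2.1 t.2.2, comp s.2.2 t.2.2)

/-- `(a,g,f)` is an almost-Riordan array: `a₀ = 1`, `g₀ = 1`, `f₀ = 0`, `f₁ = 1`. -/
def isAR (t : PowerSeries ℤ × PowerSeries ℤ × PowerSeries ℤ) : Prop :=
  coeff 0 t.1 = 1 ∧ coeff 0 t.2.1 = 1 ∧ coeff 0 t.2.2 = 0 ∧ coeff 1 t.2.2 = 1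

/-! Conjugating `(b,1,x)` by `T = (a,g,f)` first gives `T·(b,1,x) = (T·b, g, f)`. Multiplying by
`T⁻¹ = (c, gi, f̄)` with `c = 1 - x·gi·ã(f̄)`, the middle entry is `g·(gi∘f) = 1` (compose
`(g∘f̄)·gi = 1` with `f`), the last is `f̄∘f = x`, and the first is
`T·b + x·g·(c̃∘f) = a + x g b̃(f) - x ã = 1 + x g b̃(f)` because `a = 1 + x ã`. Composition with a
series without constant term agrees with Mathlib's `PowerSeries.subst`, which supplies the
multiplicativity and associativity of composition. -/

lemma coeff_pow_eq_zero_of_lt {R : Type*} [CommSemiring R] {f : PowerSeries R}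
    (hf : coeff 0 f = 0) {n k : ℕ} (h : n < k) : coeff n (f ^ k) = 0 := by
  apply coeff_of_lt_order
  grw [← le_order_pow_of_constantCoeff_eq_zero k (by simpa using hf)]
  exact_mod_cast h

lemma hasSubst_of_coeff_zero {R : Type*} [CommRing R] {f : PowerSeries R}
    (hf : coeff 0 f = 0) : HasSubst f :=
  HasSubst.of_constantCoeff_zero' (by simpa using hf)

lemma comp_eq_subst {f : PowerSeries ℤ} (hf : coeff 0 f = 0) (h : PowerSeries ℤ) :
    comp h f = h.subst f := by
  ext n
  rw [coeff_subst' (hasSubst_of_coeff_zero hf), comp, coeff_mk,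
    finsum_eq_sum_of_support_subset (s := range (n + 1))]
  · simp only [smul_eq_mul]
  · intro k hk
    by_contra hkn
    exact hk (by simp only [coeff_pow_eq_zero_of_lt hf (by simpa using hkn), smul_zero])

section comp

variable {f : PowerSeries ℤ}

lemma comp_one (hf : coeff 0 f = 0) : comp 1 f = 1 := by
  rw [comp_eq_subst hf, ← coe_substAlgHom (hasSubst_of_coeff_zero hf), map_one]

lemma comp_X (hf : coeff 0 f = 0) : comp X f = f := by
  rw [comp_eq_subst hf, subst_X (hasSubst_of_coeff_zero hf)]

lemma comp_mul (hf : coeff 0 f = 0) (u v : PowerSeries ℤ) :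
    comp (u * v) f = comp u f * comp v f := by
  simp only [comp_eq_subst hf, subst_mul (hasSubst_of_coeff_zero hf)]

lemma comp_neg (hf : coeff 0 f = 0) (u : PowerSeries ℤ) : comp (-u) f = -comp u f := by
  rw [comp_eq_subst hf, comp_eq_subst hf, ← coe_substAlgHom (hasSubst_of_coeff_zero hf), map_neg]

lemma comp_comp (hf : coeff 0 f = 0) {v : PowerSeries ℤ} (hv : coeff 0 v = 0)
    (u : PowerSeries ℤ) :
    comp (comp u v) f = comp u (comp v f) := by
  have hvf : coeff 0 (comp v f) = 0 := by simp [comp, hv]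
  rw [comp_eq_subst hv, comp_eq_subst hf, comp_eq_subst hvf, comp_eq_subst hf,
    subst_comp_subst_apply (hasSubst_of_coeff_zero hv) (hasSubst_of_coeff_zero hf)]

end comp

lemma comp_X_right (h : PowerSeries ℤ) : comp h X = h := by
  rw [comp_eq_subst coeff_zero_X, X_subst]

lemma comp_comp_of_comp_eq_X {f fi : PowerSeries ℤ} (hf0 : coeff 0 f = 0) (hfi0 : coeff 0 fi = 0)
    (hfif : comp fi f = X) (h : PowerSeries ℤ) : comp (comp h fi) f = h := by
  rw [comp_comp hf0 hfi0, hfif, comp_X_right]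

lemma one_add_X_mul_shift {a : PowerSeries ℤ} (ha : coeff 0 a = 1) : 1 + X * shift a = a := by
  ext (_ | n) <;> simp [shift, ha, coeff_one]

lemma shift_one_add_X_mul (h : PowerSeries ℤ) : shift (1 + X * h) = h := by
  ext n
  simp [shift, coeff_one]

lemma act_of_coeff_zero_eq_one {b : PowerSeries ℤ} (hb : coeff 0 b = 1) (a g f : PowerSeries ℤ) :
    act a g f b = a + X * g * comp (shift b) f := by
  simp [act, hb]

lemma arMul_X_right {f : PowerSeries ℤ} (hf : coeff 0 f = 0) (a g b : PowerSeries ℤ) :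
    arMul (a, g, f) (b, 1, X) = (act a g f b, g, f) := by
  simp only [arMul, comp_one hf, mul_one, comp_X hf]

theorem statement14_general (a g f b fi gi : PowerSeries ℤ)
    (ha : coeff 0 a = 1)
    (hf0 : coeff 0 f = 0)
    (hb : coeff 0 b = 1)
    (hfi0 : coeff 0 fi = 0)
    (hfif : comp fi f = X)
    (hgi : comp g fi * gi = 1) :
    arMul (arMul (a, g, f) (b, 1, X)) (act 1 (-gi) fi a, gi, fi) =
      (1 + X * g * comp (shift b) f, 1, X) := by
  have hg_gi : g * comp gi f = 1 := by
    simpa only [comp_mul hf0, comp_comp_of_comp_eq_X hf0 hfi0 hfif, comp_one hf0]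
      using congrArg (comp · f) hgi
  have hc : act 1 (-gi) fi a = 1 + X * -(gi * comp (shift a) fi) := by
    rw [act_of_coeff_zero_eq_one ha]
    ring
  have hc0 : coeff 0 (act 1 (-gi) fi a) = 1 := by simp [hc]
  rw [arMul_X_right hf0]
  simp only [arMul, hg_gi, hfif, Prod.mk.injEq, and_true]
  rw [act_of_coeff_zero_eq_one hc0, hc, shift_one_add_X_mul, comp_neg hf0, comp_mul hf0,
    comp_comp_of_comp_eq_X hf0 hfi0 hfif, act_of_coeff_zero_eq_one hb]
  linear_combination (-(X * shift a)) * hg_gi - one_add_X_mul_shift ha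

/-- `N = {(a,1,x)}` is normal:
`(a,g,f)·(b,1,x)·(a,g,f)⁻¹ = (1 + x g b̃(f), 1, x)`.
Here `fi = f̄`, `gi = 1/(g∘f̄)` and `(a,g,f)⁻¹ = ((1,−gi,fi)·a, gi, fi)`. -/
theorem statement14 (a g f b fi gi : PowerSeries ℤ)
    (ha : coeff 0 a = 1) (hg : coeff 0 g = 1)
    (hf0 : coeff 0 f = 0) (hf1 : coeff 1 f = 1)
    (hb : coeff 0 b = 1)
    (hfi0 : coeff 0 fi = 0)
    (hffi : comp f fi = X) (hfif : comp fi f = X)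
    (hgi : comp g fi * gi = 1) :
    arMul (arMul (a, g, f) (b, 1, X)) (act 1 (-gi) fi a, gi, fi) =
      (1 + X * g * comp (shift b) f, 1, X) :=
  statement14_general a g f b fi gi ha hf0 hb hfi0 hfif hgi
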